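/- arXiv:2408.04790 — 2 statements merged into one kernel-verified Lean document; each statement's English description precedes it below -/
import Mathlib

section
/- Let λ₁ and λ₂ be the two (complex) roots of λ² − τ_R λ + δ_R = 0 with λ₁ ≠ λ₂, and let p ≥ 3 be an integer. Then the matrix M = A_L² · A_R^{p−2} has determinant 0 and trace equal to (τ_L²(λ₁^{p−1} − λ₂^{p−1}) − τ_L λ₁λ₂(λ₁^{p−2} − λ₂^{p−2}))/(λ₁ − λ₂). -/
/-- if `λ₁ ≠ λ₂` are the two complex roots of `λ² - τR λ + δR = 0` and
`p ≥ 3`, then `M = A_L² · A_R^(p-2)` has determinant `0` and trace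
`(τL²(λ₁^(p-1) - λ₂^(p-1)) - τL λ₁λ₂(λ₁^(p-2) - λ₂^(p-2)))/(λ₁ - λ₂)`. -/
theorem stmt_4 (τL τR δR : ℝ) (l1 l2 : ℂ)
    (h1 : l1 ^ 2 - τR * l1 + δR = 0) (h2 : l2 ^ 2 - τR * l2 + δR = 0)
    (hne : l1 ≠ l2) (p : ℕ) (hp : 3 ≤ p) :
    ((!![(τL : ℂ), 1; 0, 0]) ^ 2 * (!![(τR : ℂ), 1; -(δR : ℂ), 0]) ^ (p - 2)).det = 0 ∧
    ((!![(τL : ℂ), 1; 0, 0]) ^ 2 * (!![(τR : ℂ), 1; -(δR : ℂ), 0]) ^ (p - 2)).trace =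
      ((τL : ℂ) ^ 2 * (l1 ^ (p - 1) - l2 ^ (p - 1))
        - τL * (l1 * l2) * (l1 ^ (p - 2) - l2 ^ (p - 2))) / (l1 - l2) := by
  have hd : l1 - l2 ≠ 0 := sub_ne_zero.mpr hne
  -- Vieta
  have hsum : l1 + l2 = (τR : ℂ) := by
    have h := sub_eq_zero.mpr (h1.trans h2.symm)
    have hmul : (l1 - l2) * (l1 + l2 - τR) = 0 := by linear_combination h
    rcases mul_eq_zero.mp hmul with h' | h'
    · exact absurd h' hd
    · linear_combination h'
  have hprod : l1 * l2 = (δR : ℂ) := by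
    have h3 : (l1 - l2) * (l1 * l2 - δR) = 0 := by
      linear_combination l2 * h1 - l1 * h2
    rcases mul_eq_zero.mp h3 with h' | h'
    · exact absurd h' hd
    · exact sub_eq_zero.mp h'
  have hkey : ∀ n : ℕ, (τR : ℂ) * (l1 ^ (n + 1) - l2 ^ (n + 1)) - δR * (l1 ^ n - l2 ^ n)
      = l1 ^ (n + 2) - l2 ^ (n + 2) := by
    intro n
    linear_combination (l1 ^ (n + 1) - l2 ^ (n + 1)) * hsum.symm
      - (l1 ^ n - l2 ^ n) * hprod.symm
  have hpow : ∀ n : ℕ, (!![(τR : ℂ), 1; -(δR : ℂ), 0]) ^ (n + 1) =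
      !![(l1 ^ (n + 2) - l2 ^ (n + 2)) / (l1 - l2), (l1 ^ (n + 1) - l2 ^ (n + 1)) / (l1 - l2);
        -(δR : ℂ) * ((l1 ^ (n + 1) - l2 ^ (n + 1)) / (l1 - l2)),
        -(δR : ℂ) * ((l1 ^ n - l2 ^ n) / (l1 - l2))] := by
    intro n
    induction n with
    | zero =>
      rw [pow_one]
      ext i j
      fin_cases i <;> fin_cases j <;> simp <;> field_simp <;>
        first
          | ring1
          | linear_combination (l2 - l1) * hsum
          | linear_combination (l1 - l2) * hsum
    | succ k ih =>
      rw [pow_succ, ih, Matrix.mul_fin_two]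
      ext i j
      fin_cases i <;> fin_cases j <;> simp <;>
        first
          | ring1
          | linear_combination hkey (k + 1) / (l1 - l2)
          | linear_combination -hkey (k + 1) / (l1 - l2)
          | linear_combination (-(δR : ℂ) / (l1 - l2)) * hkey k
          | linear_combination ((δR : ℂ) / (l1 - l2)) * hkey k
  obtain ⟨m, rfl⟩ : ∃ m, p = m + 3 := ⟨p - 3, by omega⟩
  have hm2 : m + 3 - 2 = m + 1 := by omega
  have hm1 : m + 3 - 1 = m + 2 := by omega
  rw [hm2, hm1, hpow m]
  constructor
  · simp [Matrix.det_mul, Matrix.det_pow, Matrix.det_fin_two_of]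
  · have hsq : (!![(τL : ℂ), 1; 0, 0]) ^ 2 = !![(τL : ℂ) ^ 2, (τL : ℂ); 0, 0] := by
      rw [sq, Matrix.mul_fin_two]; ring_nf
    rw [hsq, Matrix.mul_fin_two, Matrix.trace_fin_two_of]
    field_simp
    first
      | linear_combination (τL : ℂ) * (l1 ^ (m + 1) - l2 ^ (m + 1)) * hprod
      | linear_combination (τL : ℂ) * (l2 ^ (m + 1) - l1 ^ (m + 1)) * hprod
end

section
/- Set μ = −1 and suppose τ_L² τ_R − τ_L δ_R ≠ 1. Then the point (x^{LRL}, 0), where x^{LRL} = (τ_L τ_R + τ_L − δ_R + 1)/(τ_L² τ_R − τ_L δ_R − 1), is the unique fixed point of the composition f_L ∘ f_R ∘ f_L. Moreover, if τ_L ≠ −1, then x^{LRL} = −1 if and only if δ_R = τ_L τ_R + τ_L/(τ_L + 1). -/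
/-- The left piece of the border-collision normal form with `μ = -1`. -/
def fL (τL : ℝ) (p : ℝ × ℝ) : ℝ × ℝ := (τL * p.1 + p.2 - 1, 0)

/-- The right piece of the border-collision normal form with `μ = -1`. -/
def fR (τR δR : ℝ) (p : ℝ × ℝ) : ℝ × ℝ := (τR * p.1 + p.2 - 1, -δR * p.1)

/-! Since `fL` collapses the plane onto the `x`-axis, `fL ∘ fR ∘ fL` is the affine map
`(x, y) ↦ (c (τL x + y - 1) - τL - 1, 0)` with `c = τL τR - δR`. Its fixed points lie on the
`x`-axis, where it is the one-dimensional map `x ↦ τL c x - (c + τL + 1)`; the hypothesis says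
its slope `τL² τR - τL δR` is not `1`, so it has exactly one fixed point. -/

theorem mul_add_eq_self_iff_eq_div {a b x : ℝ} (ha : a ≠ 1) :
    a * x + b = x ↔ x = b / (1 - a) := by
  rw [eq_div_iff (sub_ne_zero.mpr ha.symm)]
  constructor <;> intro hE <;> linarith

section LRL

variable (τL τR δR : ℝ)

theorem fL_fR_fL_apply (p : ℝ × ℝ) :
    fL τL (fR τR δR (fL τL p)) =
      ((τL * τR - δR) * (τL * p.1 + p.2 - 1) - τL - 1, 0) := by
  simp only [fL, fR]
  ring_nf

theorem fL_fR_fL_eq_self_iff {p : ℝ × ℝ} (h : τL ^ 2 * τR - τL * δR ≠ 1) :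
    fL τL (fR τR δR (fL τL p)) = p ↔
      p = ((τL * τR + τL - δR + 1) / (τL ^ 2 * τR - τL * δR - 1), 0) := by
  obtain ⟨x, y⟩ := p
  have hx : (τL * τR - δR) * (τL * x - 1) - τL - 1 = x ↔
      x = (τL * τR + τL - δR + 1) / (τL ^ 2 * τR - τL * δR - 1) := by
    rw [← neg_div_neg_eq, neg_sub, ← mul_add_eq_self_iff_eq_div h]
    constructor <;> intro hE <;> linarith
  rw [fL_fR_fL_apply, Prod.mk.injEq, Prod.mk.injEq, eq_comm (a := (0 : ℝ))]
  constructor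
  · rintro ⟨hfix, rfl⟩
    exact ⟨hx.mp (by simpa using hfix), rfl⟩
  · rintro ⟨hfix, rfl⟩
    exact ⟨by simpa using hx.mpr hfix, rfl⟩

theorem xLRL_eq_neg_one_iff (h : τL ^ 2 * τR - τL * δR ≠ 1) (hτL : τL + 1 ≠ 0) :
    (τL * τR + τL - δR + 1) / (τL ^ 2 * τR - τL * δR - 1) = -1 ↔
      δR = τL * τR + τL / (τL + 1) := by
  rw [div_eq_iff (sub_ne_zero.mpr h), ← sub_eq_iff_eq_add', eq_div_iff hτL]
  constructor <;> intro hE <;> linarith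

end LRL

/-- with `μ = -1` and `τL² τR - τL δR ≠ 1`, the point `(x^{LRL}, 0)` with
`x^{LRL} = (τL τR + τL - δR + 1)/(τL² τR - τL δR - 1)` is the unique fixed point of
`fL ∘ fR ∘ fL`; moreover if `τL ≠ -1` then `x^{LRL} = -1` iff
`δR = τL τR + τL/(τL + 1)`. -/
theorem stmt_12 (τL τR δR : ℝ) (h : τL ^ 2 * τR - τL * δR ≠ 1) :
    (∀ p : ℝ × ℝ, fL τL (fR τR δR (fL τL p)) = p ↔
      p = ((τL * τR + τL - δR + 1) / (τL ^ 2 * τR - τL * δR - 1), 0)) ∧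
    (τL ≠ -1 →
      ((τL * τR + τL - δR + 1) / (τL ^ 2 * τR - τL * δR - 1) = -1 ↔
        δR = τL * τR + τL / (τL + 1))) :=
  ⟨fun _ => fL_fR_fL_eq_self_iff τL τR δR h,
    fun hτL => xLRL_eq_neg_one_iff τL τR δR h (by rwa [Ne, add_eq_zero_iff_eq_neg])⟩
end
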